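/- arXiv:1701.02164 — 4 statements merged into one kernel-verified Lean document; each statement's English description precedes it below -/
import Mathlib

section
/- Let F be a field of characteristic 2 and let (A,σ) be a central simple algebra over F with an orthogonal involution σ of the first kind. Assume (A,σ) is direct, i.e., for every x ∈ A, σ(x)x ∈ Alt(A,σ) implies x = 0. Then Sym(A,σ)⁺ is a subfield of A: it is an F-subspace of A containing F·1, closed under multiplication, commutative, and every nonzero element of Sym(A,σ)⁺ is invertible in A with inverse lying in Sym(A,σ)⁺. -/
open scoped TensorProduct

section AlgDefs
variable (F : Type*) [Field F] {A : Type*} [Ring A] [Algebra F A]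

/-- The set `Alt(A,σ) = {σ x - x : x ∈ A}` of alternating elements. -/
def AltSet (σ : A →ₗ[F] A) : Set A := Set.range fun x => σ x - x

/-- `σ` is an `F`-linear involution (anti-automorphism of order two) of the first kind. -/
def IsInvolutionOn (σ : A →ₗ[F] A) : Prop :=
  (∀ x y : A, σ (x * y) = σ y * σ x) ∧ ∀ x : A, σ (σ x) = x

/-- `σ` is an orthogonal involution: an involution with `1 ∉ Alt(A,σ)`. -/
def IsOrthInvolution (σ : A →ₗ[F] A) : Prop :=
  IsInvolutionOn F σ ∧ (1 : A) ∉ AltSet F σ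

/-- `Sym(A,σ)⁺ = {x ∈ Sym(A,σ) : x² ∈ F·1}`. -/
def SymPlus (σ : A →ₗ[F] A) : Set A :=
  {x | σ x = x ∧ ∃ α : F, x ^ 2 = algebraMap F A α}

/-- `Alt(A,σ)⁺ = {x ∈ Alt(A,σ) : x² ∈ F·1}`. -/
def AltPlus (σ : A →ₗ[F] A) : Set A :=
  {x | x ∈ AltSet F σ ∧ ∃ α : F, x ^ 2 = algebraMap F A α}

/-- `σ` is isotropic: `σ(x)·x = 0` for some nonzero `x`. -/
def IsIsotropicInv (σ : A →ₗ[F] A) : Prop := ∃ x : A, x ≠ 0 ∧ σ x * x = 0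

/-- An `F`-subalgebra of `A` which is central simple over `F`. -/
def IsCentralSimpleSub (Q : Subalgebra F A) : Prop :=
  (∀ z ∈ Q, (∀ y ∈ Q, z * y = y * z) → ∃ α : F, z = algebraMap F A α) ∧
    IsSimpleRing Q

/-- A `σ`-invariant quaternion subalgebra of `A`: a `4`-dimensional central simple
`F`-subalgebra stable under `σ`. -/
def IsQuatSub (σ : A →ₗ[F] A) (Q : Subalgebra F A) : Prop :=
  Module.finrank F Q = 4 ∧ IsCentralSimpleSub F Q ∧ ∀ x ∈ Q, σ x ∈ Q

/-- `(A, σ)` is totally decomposable with `n` quaternion factors: `A` carries `n`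
pairwise commuting `σ`-invariant quaternion subalgebras generating `A`, with
`dim_F A = 4 ^ n` (equivalently, `(A,σ)` is isomorphic to the tensor product of the
quaternion algebras with involution `(Qᵢ, σ|_{Qᵢ})`); then `deg_F A = 2 ^ n`. -/
def IsTotDec (σ : A →ₗ[F] A) (n : ℕ) : Prop :=
  Module.finrank F A = 4 ^ n ∧
    ∃ Q : Fin n → Subalgebra F A,
      (∀ i, IsQuatSub F σ (Q i)) ∧
      (∀ i j, i ≠ j → ∀ x ∈ Q i, ∀ y ∈ Q j, x * y = y * x) ∧
      iSup Q = ⊤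

/-- `S` is an inseparable subalgebra of `(A, σ)`, `A` of degree `2 ^ n`:
a (unital, commutative) subalgebra contained in `Sym(A,σ)⁺`, of dimension `2 ^ n`,
self-centralizing, and generated by `n` elements. -/
def IsInsepSub (σ : A →ₗ[F] A) (n : ℕ) (S : Subalgebra F A) : Prop :=
  (S : Set A) ⊆ SymPlus F σ ∧
  Module.finrank F S = 2 ^ n ∧
  Subalgebra.centralizer F (S : Set A) = S ∧
  ∃ g : Fin n → A, Algebra.adjoin F (Set.range g) = S

end AlgDefs

/-!
For `x, y ∈ Sym(A,σ)⁺` with `x² = α`, `y² = β`, the product `z = xy` satisfies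
`σ(z) z = z σ(z) = αβ`. In characteristic two this makes `c = σ(z) - z` symmetric with
`σ(c) c = c² = σ(z²) - z² ∈ Alt(A,σ)`, so directness forces `c = 0`, i.e. `xy = yx`.
Once `Sym(A,σ)⁺` is commutative, the Frobenius identities `(x + y)² = x² + y²` and
`(xy)² = x²y²` give closure, and a nonzero `x` has `x² = α ≠ 0` (directness again),
so `α⁻¹ x` is its inverse.
-/

theorem two_eq_zero_of_charTwo (F : Type*) {A : Type*} [Field F] [CharP F 2] [Ring A]
    [Algebra F A] : (2 : A) = 0 := by
  rw [← map_ofNat (algebraMap F A) 2, CharTwo.two_eq_zero, map_zero]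

theorem neg_eq_self_of_charTwo (F : Type*) {A : Type*} [Field F] [CharP F 2] [Ring A]
    [Algebra F A] (a : A) : -a = a :=
  neg_eq_iff_add_eq_zero.mpr (by rw [← two_mul, two_eq_zero_of_charTwo F, zero_mul])

section SymPlus

variable {F A : Type*} [Field F] [Ring A] [Algebra F A] {σ : A →ₗ[F] A}

variable (F σ) in
def IsDirect : Prop :=
  ∀ x : A, σ x * x ∈ AltSet F σ → x = 0

theorem IsInvolutionOn.map_one (hσ : IsInvolutionOn F σ) : σ 1 = 1 := by
  simpa [hσ.2] using (hσ.1 (σ 1) 1).symm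

theorem IsDirect.eq_zero_of_apply_mul_self_eq_zero (hd : IsDirect F σ) {x : A}
    (hx : σ x * x = 0) : x = 0 :=
  hd x ⟨0, by simp [hx]⟩

theorem algebraMap_mem_symPlus (hσ : IsInvolutionOn F σ) (α : F) :
    algebraMap F A α ∈ SymPlus F σ :=
  ⟨by rw [Algebra.algebraMap_eq_smul_one, map_smul, hσ.map_one], α ^ 2, (map_pow _ _ _).symm⟩

theorem smul_mem_symPlus (c : F) {x : A} (hx : x ∈ SymPlus F σ) : c • x ∈ SymPlus F σ := by
  obtain ⟨hσx, α, hα⟩ := hx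
  exact ⟨by rw [map_smul, hσx], c ^ 2 * α, by rw [smul_pow, hα, map_mul, Algebra.smul_def]⟩

theorem commute_apply_mul_of_mem_symPlus (hσ : IsInvolutionOn F σ) {x y : A}
    (hx : x ∈ SymPlus F σ) (hy : y ∈ SymPlus F σ) : Commute (σ (x * y)) (x * y) := by
  obtain ⟨hσx, α, hα⟩ := hx
  obtain ⟨hσy, β, hβ⟩ := hy
  rw [sq] at hα hβ
  have hleft : y * x * (x * y) = algebraMap F A (α * β) := by
    rw [← mul_assoc, mul_assoc y, hα, ← Algebra.commutes, mul_assoc, hβ, ← map_mul]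
  have hright : x * y * (y * x) = algebraMap F A (α * β) := by
    rw [← mul_assoc, mul_assoc x, hβ, ← Algebra.commutes, mul_assoc, hα, ← map_mul,
      mul_comm]
  rw [Commute, SemiconjBy, hσ.1, hσx, hσy, hleft, hright]

section CharTwo

variable [CharP F 2]

-- In characteristic two, `(σ z - z)² = σ(z²) + z² - 2 σ(z) z = σ(z²) - z²`.
theorem sub_sq_mem_altSet (hσ : IsInvolutionOn F σ) {z : A} (hz : Commute (σ z) z) :
    (σ z - z) ^ 2 ∈ AltSet F σ := by
  refine ⟨z * z, ?_⟩
  show σ (z * z) - z * z = _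
  have hexpand : (σ z - z) ^ 2 = σ z * σ z + z * z - 2 * (σ z * z) := by
    rw [sq, sub_mul, mul_sub, mul_sub, ← hz.eq, two_mul]; abel
  rw [hexpand, two_eq_zero_of_charTwo F, zero_mul, sub_zero, ← hσ.1,
    sub_eq_add_neg (σ (z * z)), neg_eq_self_of_charTwo F]

theorem IsDirect.apply_eq_self_of_commute (hd : IsDirect F σ) (hσ : IsInvolutionOn F σ)
    {z : A} (hz : Commute (σ z) z) : σ z = z := by
  have hsymm : σ (σ z - z) = σ z - z := by
    rw [map_sub, hσ.2, ← neg_sub, neg_eq_self_of_charTwo F]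
  have hzero : σ z - z = 0 := hd _ (by rw [hsymm, ← sq]; exact sub_sq_mem_altSet hσ hz)
  exact sub_eq_zero.mp hzero

theorem IsDirect.commute_of_mem_symPlus (hd : IsDirect F σ) (hσ : IsInvolutionOn F σ)
    {x y : A} (hx : x ∈ SymPlus F σ) (hy : y ∈ SymPlus F σ) : Commute x y := by
  have h := hd.apply_eq_self_of_commute hσ (commute_apply_mul_of_mem_symPlus hσ hx hy)
  rw [hσ.1, hx.1, hy.1] at h
  exact h.symm

theorem IsDirect.add_mem_symPlus (hd : IsDirect F σ) (hσ : IsInvolutionOn F σ) {x y : A}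
    (hx : x ∈ SymPlus F σ) (hy : y ∈ SymPlus F σ) : x + y ∈ SymPlus F σ := by
  have hxy := hd.commute_of_mem_symPlus hσ hx hy
  obtain ⟨hσx, α, hα⟩ := hx
  obtain ⟨hσy, β, hβ⟩ := hy
  refine ⟨by rw [map_add, hσx, hσy], α + β, ?_⟩
  rw [hxy.add_sq, mul_assoc, two_eq_zero_of_charTwo F, zero_mul, add_zero, hα, hβ, map_add]

theorem IsDirect.mul_mem_symPlus (hd : IsDirect F σ) (hσ : IsInvolutionOn F σ) {x y : A}
    (hx : x ∈ SymPlus F σ) (hy : y ∈ SymPlus F σ) : x * y ∈ SymPlus F σ := by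
  have hxy := hd.commute_of_mem_symPlus hσ hx hy
  obtain ⟨hσx, α, hα⟩ := hx
  obtain ⟨hσy, β, hβ⟩ := hy
  exact ⟨by rw [hσ.1, hσx, hσy, hxy.eq], α * β, by rw [hxy.mul_pow, hα, hβ, map_mul]⟩

end CharTwo

theorem IsDirect.exists_inv_mem_symPlus (hd : IsDirect F σ) {x : A} (hx : x ∈ SymPlus F σ)
    (hx0 : x ≠ 0) : ∃ y ∈ SymPlus F σ, x * y = 1 ∧ y * x = 1 := by
  obtain ⟨hσx, α, hα⟩ := hx
  have hα0 : α ≠ 0 := by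
    rintro rfl
    exact hx0 (hd.eq_zero_of_apply_mul_self_eq_zero (by rw [hσx, ← sq, hα, map_zero]))
  have hinv : α⁻¹ • (x * x) = 1 := by
    rw [← sq, hα, Algebra.algebraMap_eq_smul_one, smul_smul, inv_mul_cancel₀ hα0, one_smul]
  exact ⟨α⁻¹ • x, smul_mem_symPlus α⁻¹ ⟨hσx, α, hα⟩, by rwa [mul_smul_comm],
    by rwa [smul_mul_assoc]⟩

end SymPlus

theorem statement_0_general {F A : Type*} [Field F] [CharP F 2] [Ring A] [Algebra F A]
    (σ : A →ₗ[F] A) (hσ : IsOrthInvolution F σ)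
    (hdirect : ∀ x : A, σ x * x ∈ AltSet F σ → x = 0) :
    (∀ α : F, algebraMap F A α ∈ SymPlus F σ) ∧
    (∀ x ∈ SymPlus F σ, ∀ y ∈ SymPlus F σ, x + y ∈ SymPlus F σ) ∧
    (∀ c : F, ∀ x ∈ SymPlus F σ, c • x ∈ SymPlus F σ) ∧
    (∀ x ∈ SymPlus F σ, ∀ y ∈ SymPlus F σ, x * y ∈ SymPlus F σ) ∧
    (∀ x ∈ SymPlus F σ, ∀ y ∈ SymPlus F σ, x * y = y * x) ∧
    (∀ x ∈ SymPlus F σ, x ≠ 0 → ∃ y ∈ SymPlus F σ, x * y = 1 ∧ y * x = 1) := by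
  have hd : IsDirect F σ := hdirect
  exact ⟨algebraMap_mem_symPlus hσ.1, fun _ hx _ hy => hd.add_mem_symPlus hσ.1 hx hy,
    fun c _ hx => smul_mem_symPlus c hx, fun _ hx _ hy => hd.mul_mem_symPlus hσ.1 hx hy,
    fun _ hx _ hy => hd.commute_of_mem_symPlus hσ.1 hx hy,
    fun _ hx hx0 => hd.exists_inv_mem_symPlus hx hx0⟩

/-- For a direct central simple algebra with orthogonal involution `(A,σ)`
over a field `F` of characteristic two, `Sym(A,σ)⁺` is a subfield of `A`. -/
theorem statement_0 {F A : Type*} [Field F] [CharP F 2] [Ring A] [Algebra F A]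
    [FiniteDimensional F A]
    (hcentral : ∀ z : A, (∀ y : A, z * y = y * z) → ∃ α : F, z = algebraMap F A α)
    (hsimple : IsSimpleRing A)
    (σ : A →ₗ[F] A) (hσ : IsOrthInvolution F σ)
    (hdirect : ∀ x : A, σ x * x ∈ AltSet F σ → x = 0) :
    (∀ α : F, algebraMap F A α ∈ SymPlus F σ) ∧
    (∀ x ∈ SymPlus F σ, ∀ y ∈ SymPlus F σ, x + y ∈ SymPlus F σ) ∧
    (∀ c : F, ∀ x ∈ SymPlus F σ, c • x ∈ SymPlus F σ) ∧
    (∀ x ∈ SymPlus F σ, ∀ y ∈ SymPlus F σ, x * y ∈ SymPlus F σ) ∧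
    (∀ x ∈ SymPlus F σ, ∀ y ∈ SymPlus F σ, x * y = y * x) ∧
    (∀ x ∈ SymPlus F σ, x ≠ 0 → ∃ y ∈ SymPlus F σ, x * y = 1 ∧ y * x = 1) :=
  statement_0_general σ hσ hdirect
end

section
/- Let F be a field of characteristic 2, let b be an anisotropic bilinear Pfister form over F, and let α ∈ F× with α ∉ D(b). Then α ∉ F^{×2} (so K = F(√α) is a quadratic field extension of F) and the scalar extension b_K is anisotropic. -/
open scoped TensorProduct

section FormDefs
variable {F : Type*} [Field F]

/-- The diagonal bilinear form `⟨d₁, …, dₘ⟩` on `ι → F`. -/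
noncomputable def diagBilin {ι : Type*} [Fintype ι] [DecidableEq ι] (d : ι → F) :
    LinearMap.BilinForm F (ι → F) :=
  Matrix.toBilin' (Matrix.diagonal d)

/-- The bilinear `n`-fold Pfister form `⟨⟨a₁, …, aₙ⟩⟩ = ⟨1,a₁⟩ ⊗ ⋯ ⊗ ⟨1,aₙ⟩`,
realized as the diagonal form whose entries are the products of subsets of the `aᵢ`. -/
noncomputable def pfister {n : ℕ} (a : Fin n → F) :
    LinearMap.BilinForm F ((Fin n → Bool) → F) :=
  diagBilin fun s => ∏ i, if s i then a i else 1

/-- A bilinear form represents `α`. -/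
def BRepresents {V : Type*} [AddCommGroup V] [Module F V]
    (b : LinearMap.BilinForm F V) (α : F) : Prop :=
  ∃ v : V, v ≠ 0 ∧ b v v = α

/-- A bilinear form is anisotropic if it does not represent `0`. -/
def BAnisotropic {V : Type*} [AddCommGroup V] [Module F V]
    (b : LinearMap.BilinForm F V) : Prop :=
  ∀ v : V, v ≠ 0 → b v v ≠ 0

/-- Isometry of bilinear forms. -/
def BIsometric {V W : Type*} [AddCommGroup V] [Module F V] [AddCommGroup W] [Module F W]
    (b : LinearMap.BilinForm F V) (c : LinearMap.BilinForm F W) : Prop :=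
  ∃ e : V ≃ₗ[F] W, ∀ x y : V, c (e x) (e y) = b x y

/-- `b` has Pfister index `r`: `b ≃ ⟨⟨1,…,1⟩⟩ ⊗ b'` (with `r` slots equal to `1`) for some
anisotropic bilinear Pfister form `b'`. -/
def HasPfIdx {V : Type*} [AddCommGroup V] [Module F V]
    (b : LinearMap.BilinForm F V) (r : ℕ) : Prop :=
  ∃ (m : ℕ) (c : Fin m → F), (∀ i, c i ≠ 0) ∧ BAnisotropic (pfister c) ∧
    BIsometric b (pfister (Fin.append (fun _ : Fin r => (1 : F)) c))

end FormDefs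

section AuxLemmas

lemma diagBilin_apply' {F : Type*} [Field F] {ι : Type*} [Fintype ι] [DecidableEq ι]
    (d : ι → F) (v w : ι → F) :
    diagBilin d v w = ∑ i, d i * (v i * w i) := by
  classical
  rw [diagBilin, Matrix.toBilin'_apply']
  simp only [dotProduct, Matrix.mulVec_diagonal]
  exact Finset.sum_congr rfl fun i _ => by ring

lemma pfister_apply' {F : Type*} [Field F] {n : ℕ} (a : Fin n → F)
    (v w : (Fin n → Bool) → F) :
    pfister a v w = ∑ s, (∏ i, if s i then a i else 1) * (v s * w s) :=
  diagBilin_apply' _ v w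

/-- The set of values of a bilinear Pfister form in characteristic 2 is closed under
multiplication. -/
lemma pfister_mul' {K : Type*} [Field K] [CharP K 2] {n : ℕ} (a : Fin n → K)
    (v w : (Fin n → Bool) → K) :
    ∃ z : (Fin n → Bool) → K, pfister a z z = pfister a v v * pfister a w w := by
  classical
  refine ⟨fun r => ∑ s, (∏ i, if s i && !(r i) then a i else 1) *
      (v s * w fun i => xor (s i) (r i)), ?_⟩
  have key : ∀ s r : Fin n → Bool,
      (∏ i, if r i then a i else 1) * (∏ i, if s i && !(r i) then a i else 1) ^ 2 =
      (∏ i, if s i then a i else 1) * ∏ i, if xor (s i) (r i) then a i else 1 := by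
    intro s r
    rw [← Finset.prod_pow, ← Finset.prod_mul_distrib, ← Finset.prod_mul_distrib]
    refine Finset.prod_congr rfl fun i _ => ?_
    cases hs : s i <;> cases hr : r i <;> simp <;> ring
  rw [pfister_apply', pfister_apply', pfister_apply', Finset.sum_mul_sum]
  have lhs1 : ∀ r : Fin n → Bool,
      (∏ i, if r i then a i else 1) *
        ((∑ s, (∏ i, if s i && !(r i) then a i else 1) * (v s * w fun i => xor (s i) (r i))) *
         (∑ s, (∏ i, if s i && !(r i) then a i else 1) * (v s * w fun i => xor (s i) (r i)))) =
      ∑ s, ((∏ i, if s i then a i else 1) * (v s * v s)) *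
        ((∏ i, if xor (s i) (r i) then a i else 1) *
          ((w fun i => xor (s i) (r i)) * (w fun i => xor (s i) (r i)))) := by
    intro r
    rw [CharTwo.sum_mul_self, Finset.mul_sum]
    refine Finset.sum_congr rfl fun s _ => ?_
    linear_combination (v s * v s *
      ((w fun i => xor (s i) (r i)) * (w fun i => xor (s i) (r i)))) * key s r
  simp only [lhs1]
  rw [Finset.sum_comm]
  refine Finset.sum_congr rfl fun s _ => ?_
  have hinv : Function.Involutive (fun t : Fin n → Bool => fun i => xor (s i) (t i)) := by
    intro t; funext i; show xor (s i) (xor (s i) (t i)) = t i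
    cases s i <;> cases t i <;> rfl
  rw [← Equiv.sum_comp (Function.Involutive.toPerm _ hinv)
      (fun t => ((∏ i, if s i then a i else 1) * (v s * v s)) *
        ((∏ i, if t i then a i else 1) * (w t * w t)))]
  rfl

lemma pfister_single' {F : Type*} [Field F] {n : ℕ} (a : Fin n → F) (c : F) :
    pfister a (Pi.single (fun _ => false) c) (Pi.single (fun _ => false) c) = c * c := by
  classical
  rw [pfister_apply', Finset.sum_eq_single (fun _ : Fin n => false)]
  · simp
  · intro s _ hs
    simp [Pi.single_apply, hs]
  · simp

lemma pfister_smul' {F : Type*} [Field F] {n : ℕ} (a : Fin n → F) (c : F)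
    (z : (Fin n → Bool) → F) :
    pfister a (c • z) (c • z) = c * c * pfister a z z := by
  rw [pfister_apply', pfister_apply', Finset.mul_sum]
  refine Finset.sum_congr rfl fun s _ => ?_
  simp only [Pi.smul_apply, smul_eq_mul]
  ring

lemma adjoin_decomp' {F K : Type*} [Field F] [Field K] [Algebra F K] (r : K) (α : F)
    (hr : r ^ 2 = algebraMap F K α) (htop : Algebra.adjoin F {r} = ⊤) (x : K) :
    ∃ c d : F, x = algebraMap F K c + algebraMap F K d * r := by
  have hx : x ∈ Algebra.adjoin F {r} := htop ▸ Algebra.mem_top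
  induction hx using Algebra.adjoin_induction with
  | mem y hy =>
    rw [Set.mem_singleton_iff] at hy
    exact ⟨0, 1, by simp [hy]⟩
  | algebraMap c => exact ⟨c, 0, by simp⟩
  | add y z _ _ hy hz =>
    obtain ⟨c, d, rfl⟩ := hy
    obtain ⟨e, f, rfl⟩ := hz
    exact ⟨c + e, d + f, by simp only [map_add]; ring⟩
  | mul y z _ _ hy hz =>
    obtain ⟨c, d, rfl⟩ := hy
    obtain ⟨e, f, rfl⟩ := hz
    refine ⟨c * e + d * f * α, c * f + d * e, ?_⟩
    simp only [map_add, map_mul]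
    linear_combination (algebraMap F K d * algebraMap F K f) * hr

end AuxLemmas

/-- If `b` is an anisotropic bilinear Pfister form over `F` and `α ∈ F×` is
not represented by `b`, then `α ∉ F^{×2}` and `b` stays anisotropic over `K = F(√α)`. -/
theorem statement_7 {F : Type*} [Field F] [CharP F 2] {n : ℕ} (a : Fin n → F)
    (ha : ∀ i, a i ≠ 0) (haniso : BAnisotropic (pfister a))
    (α : F) (hα0 : α ≠ 0) (hαD : ¬ BRepresents (pfister a) α) :
    (∀ β : F, β ^ 2 ≠ α) ∧
    ∀ (K : Type*) [Field K] [Algebra F K],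
      ∀ r : K, r ^ 2 = algebraMap F K α → Algebra.adjoin F {r} = ⊤ →
        BAnisotropic (pfister fun i => algebraMap F K (a i)) := by
  classical
  have h1 : ∀ β : F, β ^ 2 ≠ α := by
    intro β hβ
    have hβ0 : β ≠ 0 := by
      rintro rfl
      rw [← hβ] at hα0
      simp at hα0
    apply hαD
    refine ⟨Pi.single (fun _ => false) β, ?_, ?_⟩
    · intro h
      apply hβ0
      have := congrFun h (fun _ => false)
      simpa using this
    · rw [pfister_single', ← pow_two, hβ]
  refine ⟨h1, ?_⟩
  intro K _ _ r hr htop v hv hbv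
  haveI : CharP K 2 := charP_of_injective_algebraMap (algebraMap F K).injective 2
  have hFK : Function.Injective (algebraMap F K) := (algebraMap F K).injective
  have h2K : (2 : K) = 0 := by
    have := CharP.cast_eq_zero K 2
    exact_mod_cast this
  have h2F : (2 : F) = 0 := by
    have := CharP.cast_eq_zero F 2
    exact_mod_cast this
  -- decompose the coordinates of v
  choose x y hxy using fun s => adjoin_decomp' r α hr htop (v s)
  -- the key identity
  have hcalc : (pfister fun i => algebraMap F K (a i)) v v
      = algebraMap F K (pfister a x x + α * pfister a y y) := by
    rw [pfister_apply']
    have step : ∀ s : Fin n → Bool,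
        (∏ i, if s i then algebraMap F K (a i) else 1) * (v s * v s) =
        algebraMap F K ((∏ i, if s i then a i else 1) * (x s * x s)
          + α * ((∏ i, if s i then a i else 1) * (y s * y s))) := by
      intro s
      have hprod : (∏ i, if s i then algebraMap F K (a i) else 1) =
          algebraMap F K (∏ i, if s i then a i else 1) := by
        rw [map_prod]
        exact Finset.prod_congr rfl fun i _ => by split <;> simp
      rw [hprod, hxy s]
      simp only [map_add, map_mul]
      linear_combination (algebraMap F K (∏ i, if s i then a i else 1) *
          (algebraMap F K (y s) * algebraMap F K (y s))) * hr +
        (algebraMap F K (∏ i, if s i then a i else 1) * algebraMap F K (x s) *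
          algebraMap F K (y s) * r) * h2K
    rw [Finset.sum_congr rfl fun s _ => step s, ← map_sum]
    congr 1
    rw [pfister_apply', pfister_apply', Finset.sum_add_distrib, Finset.mul_sum]
  rw [hcalc] at hbv
  have hzero : pfister a x x + α * pfister a y y = 0 := by
    apply hFK
    rw [hbv, map_zero]
  have heq : pfister a x x = α * pfister a y y := by
    linear_combination hzero - (α * pfister a y y) * h2F
  by_cases hy : y = 0
  · have hx : x ≠ 0 := by
      intro hx0
      apply hv
      funext s
      rw [hxy s, congrFun hx0 s, congrFun hy s]
      simp
    refine haniso x hx ?_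
    rw [heq, hy]
    simp
  · have hw : pfister a y y ≠ 0 := haniso y hy
    obtain ⟨z₁, hz₁⟩ := pfister_mul' a x y
    set w := pfister a y y with hwdef
    apply hαD
    refine ⟨w⁻¹ • z₁, ?_, ?_⟩
    · intro hzz
      apply hα0
      have : pfister a (w⁻¹ • z₁) (w⁻¹ • z₁) = 0 := by rw [hzz]; simp
      rw [pfister_smul', hz₁, heq] at this
      field_simp at this
      exact this
    · rw [pfister_smul', hz₁, heq]
      field_simp
end

section
/- Let F be a field of characteristic 2, let α ∈ F, and let A₁,…,A_m ∈ M₂(F). If the matrix α·I + Σ_{i=1}^m Aᵢᵀ·Aᵢ lies in Alt(M₂(F), t), i.e., equals Bᵀ + B for some B ∈ M₂(F), then α = β² for some β ∈ F. -/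
open scoped TensorProduct Matrix

/-! The diagonal of `Bᵀ + B` is `2 • B j j = 0`, while the `(0, 0)` entry of `∑ i, (A i)ᵀ * A i`
is the sum of squares `∑ i, ∑ k, (A i k 0) ^ 2`, which in characteristic two is the square of
`∑ i, ∑ k, A i k 0`. Comparing `(0, 0)` entries therefore gives `α = (∑ i, ∑ k, A i k 0) ^ 2`. -/

namespace Matrix

variable {m n ι R : Type*} [Fintype m]

lemma transpose_add_self_apply_self [Semiring R] [CharP R 2] (B : Matrix n n R) (j : n) :
    (Bᵀ + B) j j = 0 :=
  CharTwo.add_self_eq_zero (B j j)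

lemma transpose_mul_self_apply_self [Semiring R] (A : Matrix m n R) (j : n) :
    (Aᵀ * A) j j = ∑ k, A k j ^ 2 := by
  simp only [mul_apply, transpose_apply, sq]

lemma sum_transpose_mul_self_apply_self [CommSemiring R] [CharP R 2] [Fintype ι]
    (A : ι → Matrix m n R) (j : n) :
    (∑ i, (A i)ᵀ * A i) j j = (∑ i, ∑ k, A i k j) ^ 2 := by
  simp only [sum_apply, transpose_mul_self_apply_self, CharTwo.sum_sq]

end Matrix

/-- If `α·I + Σ Aᵢᵀ·Aᵢ ∈ Alt(M₂(F), t)` over a field of characteristic two,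
then `α` is a square in `F`. -/
theorem statement_8 {F : Type*} [Field F] [CharP F 2] (α : F) {m : ℕ}
    (A : Fin m → Matrix (Fin 2) (Fin 2) F)
    (h : ∃ B : Matrix (Fin 2) (Fin 2) F,
      α • (1 : Matrix (Fin 2) (Fin 2) F) + ∑ i, (A i)ᵀ * A i = Bᵀ + B) :
    ∃ β : F, β ^ 2 = α := by
  obtain ⟨B, hB⟩ := h
  have h00 := congrFun (congrFun hB 0) 0
  rw [Matrix.add_apply, Matrix.smul_apply, Matrix.one_apply_eq, smul_eq_mul, mul_one,
    Matrix.sum_transpose_mul_self_apply_self, Matrix.transpose_add_self_apply_self,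
    CharTwo.add_eq_zero] at h00
  exact ⟨_, h00.symm⟩
end

section
/- Let F be a field of characteristic 2, let (A,σ) be a central simple algebra with orthogonal involution over F, and let τ be an orthogonal involution on M₂(F). If (A ⊗_F M₂(F), σ ⊗ τ) is isomorphic, as an F-algebra with involution, to (M_{2ⁿ}(F), t) with t the transpose involution, then (A,σ) is isomorphic, as an F-algebra with involution, to (M_{2^{n−1}}(F), t). -/
open scoped TensorProduct Matrix

/-!
An orthogonal involution `τ` of `M₂(F)` has the form `x ↦ q xᵀ q⁻¹` with `q` symmetric
(Skolem–Noether), and orthogonality means that `q` has a nonzero diagonal entry; this produces a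
`τ`-symmetric rank-one idempotent `e`. Then `a ↦ f (a ⊗ e)` identifies `(A, σ)` with the corner
`p M_{2ⁿ}(F) p` under the transpose, where `p = f (1 ⊗ e)` is a symmetric idempotent, and
orthogonality of `σ` again means that `p` has a nonzero diagonal entry.

In characteristic two `v ⬝ᵥ v = (∑ i, v i) ^ 2` is a square, so every non-isotropic vector can be
normalised. Splitting off unit vectors one at a time (replacing `e` by `e + w` for a hyperbolic
pair `w, w'` whenever the complement of `e` is alternating) gives `p = B Bᵀ` with `Bᵀ B = 1`, and
`X ↦ Bᵀ X B` maps the corner onto `M_r(F)`, compatibly with transposes. Counting dimensions,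
`4 r² = 4ⁿ`.
-/

open Matrix

namespace Matrix

variable {ι : Type*}

theorem exists_transpose_add_eq {R : Type*} [AddCommMonoid R] {M : Matrix ι ι R}
    (hM : M.IsSymm) (hdiag : ∀ i, M i i = 0) : ∃ y : Matrix ι ι R, yᵀ + y = M := by
  let : LinearOrder ι := IsWellOrder.linearOrder WellOrderingRel
  refine ⟨of fun i j => if i < j then M i j else 0, ?_⟩
  ext i j
  rcases lt_trichotomy i j with h | rfl | h
  · simp [h, h.not_gt]
  · simp [hdiag]
  · simp [h, h.not_gt, ← hM.apply i j]

theorem IsSymm.sub_vecMulVec_self {R : Type*} [CommRing R] {p : Matrix ι ι R} (hp : p.IsSymm)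
    (e : ι → R) : (p - vecMulVec e e).IsSymm := by
  rw [IsSymm, transpose_sub, transpose_vecMulVec, hp.eq]

section CommRing

variable [Fintype ι] {R : Type*} [CommRing R]

theorem IsSymm.dotProduct_mulVec_comm {p : Matrix ι ι R} (hp : p.IsSymm) (v w : ι → R) :
    v ⬝ᵥ (p *ᵥ w) = (p *ᵥ v) ⬝ᵥ w := by
  rw [dotProduct_mulVec, ← vecMul_transpose, hp.eq]

theorem IsSymm.mulVec_dotProduct_mulVec {p : Matrix ι ι R} (hp : p.IsSymm)
    (hpp : IsIdempotentElem p) (v w : ι → R) : (p *ᵥ v) ⬝ᵥ (p *ᵥ w) = v ⬝ᵥ (p *ᵥ w) := by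
  rw [← hp.dotProduct_mulVec_comm, mulVec_mulVec, hpp.eq]

theorem IsSymm.dotProduct_mulVec_self_eq_zero [CharP R 2] {M : Matrix ι ι R} (hM : M.IsSymm)
    (hdiag : ∀ i, M i i = 0) (v : ι → R) : v ⬝ᵥ (M *ᵥ v) = 0 := by
  obtain ⟨y, rfl⟩ := exists_transpose_add_eq hM hdiag
  rw [add_mulVec, dotProduct_add, dotProduct_mulVec, vecMul_transpose, dotProduct_comm,
    CharTwo.add_self_eq_zero]

theorem dotProduct_self_eq_sq_sum [CharP R 2] (v : ι → R) : v ⬝ᵥ v = (∑ i, v i) ^ 2 := by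
  rw [sum_pow_char]
  simp [dotProduct, sq]

theorem isIdempotentElem_vecMulVec {a u : ι → R} (h : u ⬝ᵥ a = 1) :
    IsIdempotentElem (vecMulVec a u) := by
  rw [IsIdempotentElem, vecMulVec_mul_vecMulVec, h, one_smul]

theorem vecMulVec_mul_mul_vecMulVec (a u : ι → R) (x : Matrix ι ι R) :
    vecMulVec a u * x * vecMulVec a u = ((u ᵥ* x) ⬝ᵥ a) • vecMulVec a u := by
  rw [vecMulVec_mul, vecMulVec_mul_vecMulVec, vecMulVec_smul]

section SubVecMulVec

variable {p : Matrix ι ι R} {e : ι → R}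

theorem mul_vecMulVec_self (he : p *ᵥ e = e) : p * vecMulVec e e = vecMulVec e e := by
  rw [mul_vecMulVec, he]

theorem vecMulVec_self_mul (hp : p.IsSymm) (he : p *ᵥ e = e) :
    vecMulVec e e * p = vecMulVec e e := by
  rw [vecMulVec_mul, ← hp.eq, vecMul_transpose, he]

theorem sub_vecMulVec_mulVec_self (he : p *ᵥ e = e) (hee : e ⬝ᵥ e = 1) :
    (p - vecMulVec e e) *ᵥ e = 0 := by
  simp [sub_mulVec, vecMulVec_mulVec, he, hee]

theorem isIdempotentElem_sub_vecMulVec (hp : p.IsSymm) (hpp : IsIdempotentElem p)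
    (he : p *ᵥ e = e) (hee : e ⬝ᵥ e = 1) : IsIdempotentElem (p - vecMulVec e e) := by
  rw [IsIdempotentElem, sub_mul, mul_sub, mul_sub, hpp.eq, mul_vecMulVec_self he,
    vecMulVec_self_mul hp he, (isIdempotentElem_vecMulVec hee).eq]
  abel

end SubVecMulVec

end CommRing

section Field

variable [Fintype ι] {F : Type*} [Field F]

theorem rank_sub_vecMulVec_lt {p : Matrix ι ι F} {e : ι → F} (hp : p.IsSymm)
    (hpp : IsIdempotentElem p) (he : p *ᵥ e = e) (hee : e ⬝ᵥ e = 1) :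
    (p - vecMulVec e e).rank < p.rank := by
  refine Submodule.finrank_lt_finrank_of_lt
    (SetLike.lt_iff_le_and_exists.2 ⟨?_, e, LinearMap.mem_range.2 ⟨e, he⟩, ?_⟩)
  · rintro _ ⟨v, rfl⟩
    refine ⟨(p - vecMulVec e e) *ᵥ v, ?_⟩
    simp only [mulVecLin_apply, mulVec_mulVec, mul_sub, hpp.eq, mul_vecMulVec_self he]
  · rintro ⟨v, hv⟩
    rw [mulVecLin_apply] at hv
    have := (hp.sub_vecMulVec_self e).dotProduct_mulVec_comm e v
    rw [hv, hee, sub_vecMulVec_mulVec_self he hee, zero_dotProduct] at this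
    exact one_ne_zero this

variable [DecidableEq ι]

theorem exists_mulVec_eq_self_dotProduct_eq_one {p : Matrix ι ι F} (hp : p.IsSymm)
    (hpp : IsIdempotentElem p) (hp0 : p ≠ 0) :
    ∃ w₁ w₂ : ι → F, p *ᵥ w₁ = w₁ ∧ p *ᵥ w₂ = w₂ ∧ w₁ ⬝ᵥ w₂ = 1 := by
  obtain ⟨j, k, hjk⟩ : ∃ j k, p j k ≠ 0 := by
    by_contra! h
    exact hp0 (ext h)
  refine ⟨p *ᵥ Pi.single j 1, (p j k)⁻¹ • p *ᵥ Pi.single k 1, ?_, ?_, ?_⟩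
  · rw [mulVec_mulVec, hpp.eq]
  · rw [mulVec_smul, mulVec_mulVec, hpp.eq]
  · rw [dotProduct_smul, hp.mulVec_dotProduct_mulVec hpp]
    simp [mulVec_single, hjk]

theorem isUnit_of_forall_exists_mul_eq {q : Matrix ι ι F} (hq : q ≠ 0)
    (h : ∀ x, ∃ y, y * q = q * x) : IsUnit q := by
  rw [← mulVec_injective_iff_isUnit]
  refine (injective_iff_map_eq_zero q.mulVecLin).2 fun v hv => ?_
  by_contra hv0
  obtain ⟨k, hk⟩ : ∃ k, v k ≠ 0 := by
    by_contra! h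
    exact hv0 (funext h)
  refine hq (ext_of_mulVec_single fun j => ?_)
  obtain ⟨y, hy⟩ := h (vecMulVec (Pi.single j 1) (Pi.single k (v k)⁻¹))
  rw [zero_mulVec]
  calc q *ᵥ Pi.single j 1
      = q *ᵥ (vecMulVec (Pi.single j 1) (Pi.single k (v k)⁻¹) *ᵥ v) := by
        simp [vecMulVec_mulVec, hk]
    _ = y *ᵥ (q *ᵥ v) := by rw [mulVec_mulVec, mulVec_mulVec, hy]
    _ = 0 := by rw [← q.mulVecLin_apply, hv, mulVec_zero]

theorem exists_ne_zero_algHom_mul_eq_mul [Nonempty ι] (g : Matrix ι ι F →ₐ[F] Matrix ι ι F) :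
    ∃ q ≠ 0, ∀ x, g x * q = q * x := by
  obtain ⟨v₀, w, u, hvwu⟩ : ∃ v₀ w u : ι → F, g (vecMulVec v₀ w) *ᵥ u ≠ 0 := by
    by_contra! h
    have hg : ∀ x, g x = 0 := fun x => by
      induction x using Matrix.induction_on' with
      | h_zero => exact map_zero g
      | h_add x y hx hy => rw [map_add, hx, hy, add_zero]
      | h_std_basis i j c =>
        rw [← mul_one c, ← smul_eq_mul, ← smul_single, map_smul,
          single_eq_single_vecMulVec_single,
          ext_of_mulVec_single fun k => (h _ _ _).trans (zero_mulVec _).symm, smul_zero]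
    exact one_ne_zero ((map_one g).symm.trans (hg 1))
  -- `v ↦ g (v wᵀ) u` intertwines the standard action of `M_ι(F)` with the one twisted by `g`
  let ℓ : (ι → F) →ₗ[F] ι → F :=
    { toFun := fun v => g (vecMulVec v w) *ᵥ u
      map_add' := fun v v' => by rw [add_vecMulVec, map_add, add_mulVec]
      map_smul' := fun c v => by rw [smul_vecMulVec, map_smul, smul_mulVec, RingHom.id_apply] }
  refine ⟨LinearMap.toMatrix' ℓ, fun h => hvwu ?_, fun x => ext_of_mulVec_single fun j => ?_⟩
  · simpa [ℓ] using congrArg (· *ᵥ v₀) h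
  · rw [← mulVec_mulVec, ← mulVec_mulVec, LinearMap.toMatrix'_mulVec, LinearMap.toMatrix'_mulVec]
    simp only [ℓ, LinearMap.coe_mk, AddHom.coe_mk, mulVec_mulVec, ← map_mul, mul_vecMulVec]

section CharTwo

variable [CharP F 2] {p : Matrix ι ι F}

theorem exists_mulVec_eq_self_dotProduct_self_eq_one (hp : p.IsSymm)
    (hpp : IsIdempotentElem p) {i : ι} (hi : p i i ≠ 0) :
    ∃ e : ι → F, p *ᵥ e = e ∧ e ⬝ᵥ e = 1 := by
  set u := p *ᵥ Pi.single i 1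
  have huu : u ⬝ᵥ u = p i i := by
    rw [hp.mulVec_dotProduct_mulVec hpp]
    simp [mulVec_single]
  have hsum : (∑ j, u j) ≠ 0 := by
    rw [← huu, dotProduct_self_eq_sq_sum] at hi
    exact fun h => hi (by simp [h])
  refine ⟨(∑ j, u j)⁻¹ • u, ?_, ?_⟩
  · rw [mulVec_smul, mulVec_mulVec, hpp.eq]
  · rw [smul_dotProduct, dotProduct_smul, dotProduct_self_eq_sq_sum, smul_eq_mul, smul_eq_mul]
    field_simp

theorem exists_unit_vector_sub_vecMulVec_nonalternating (hp : p.IsSymm)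
    (hpp : IsIdempotentElem p) {i : ι} (hi : p i i ≠ 0) :
    ∃ e : ι → F, p *ᵥ e = e ∧ e ⬝ᵥ e = 1 ∧
      ((∀ j, (p - vecMulVec e e) j j = 0) → p - vecMulVec e e = 0) := by
  obtain ⟨e₀, he₀, he₀e₀⟩ := exists_mulVec_eq_self_dotProduct_self_eq_one hp hpp hi
  set p₀ := p - vecMulVec e₀ e₀
  by_cases hgood : (∀ j, p₀ j j = 0) → p₀ = 0
  · exact ⟨e₀, he₀, he₀e₀, hgood⟩
  push Not at hgood
  obtain ⟨hdiag₀, hp₀⟩ := hgood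
  have hp₀s : p₀.IsSymm := hp.sub_vecMulVec_self e₀
  obtain ⟨w₁, w₂, hw₁, hw₂, hw₁₂⟩ := exists_mulVec_eq_self_dotProduct_eq_one hp₀s
    (isIdempotentElem_sub_vecMulVec hp hpp he₀ he₀e₀) hp₀
  have hpw : ∀ w, p₀ *ᵥ w = w → p *ᵥ w = w := fun w hw => by
    rw [← hw, mulVec_mulVec, mul_sub, hpp.eq, mul_vecMulVec_self he₀]
  have he₀w : ∀ w, p₀ *ᵥ w = w → e₀ ⬝ᵥ w = 0 := fun w hw => by
    rw [← hw, hp₀s.dotProduct_mulVec_comm, sub_vecMulVec_mulVec_self he₀ he₀e₀,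
      zero_dotProduct]
  have hww : ∀ w, p₀ *ᵥ w = w → w ⬝ᵥ w = 0 := fun w hw => by
    rw [← hp₀s.dotProduct_mulVec_self_eq_zero hdiag₀ w, hw]
  -- `e₀ + w₁` is a unit vector whose complement contains the unit vector `e₀ + w₂`
  have hunit : ∀ w, p₀ *ᵥ w = w → (e₀ + w) ⬝ᵥ (e₀ + w) = 1 := fun w hw => by
    simp only [add_dotProduct, dotProduct_add, dotProduct_comm w e₀, he₀e₀, he₀w w hw, hww w hw,
      add_zero]
  refine ⟨e₀ + w₁, by rw [mulVec_add, he₀, hpw w₁ hw₁], hunit w₁ hw₁, fun hdiag₁ => ?_⟩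
  have h₁₂ : (e₀ + w₁) ⬝ᵥ (e₀ + w₂) = 0 := by
    simp only [add_dotProduct, dotProduct_add, dotProduct_comm w₁ e₀, he₀e₀, he₀w w₁ hw₁,
      he₀w w₂ hw₂, hw₁₂, add_zero, zero_add, CharTwo.add_self_eq_zero]
  have h₂ : (p - vecMulVec (e₀ + w₁) (e₀ + w₁)) *ᵥ (e₀ + w₂) = e₀ + w₂ := by
    rw [sub_mulVec, vecMulVec_mulVec, h₁₂, MulOpposite.op_zero, zero_smul, sub_zero, mulVec_add,
      he₀, hpw w₂ hw₂]
  have := (hp.sub_vecMulVec_self _).dotProduct_mulVec_self_eq_zero hdiag₁ (e₀ + w₂)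
  rw [h₂, hunit w₂ hw₂] at this
  exact (one_ne_zero this).elim

theorem exists_orthonormal_factorization (hp : p.IsSymm) (hpp : IsIdempotentElem p)
    (halt : (∀ i, p i i = 0) → p = 0) :
    ∃ (κ : Type) (_ : Fintype κ) (_ : DecidableEq κ) (B : Matrix ι κ F),
      Bᵀ * B = 1 ∧ B * Bᵀ = p := by
  induction hr : p.rank using Nat.strong_induction_on generalizing p with
  | _ r ih =>
  by_cases hdiag : ∀ i, p i i = 0
  · exact ⟨Empty, inferInstance, inferInstance, 0, Subsingleton.elim _ _, by
      simp [halt hdiag]⟩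
  push Not at hdiag
  obtain ⟨i, hi⟩ := hdiag
  obtain ⟨e, he, hee, halt'⟩ := exists_unit_vector_sub_vecMulVec_nonalternating hp hpp hi
  obtain ⟨κ, _, _, B, hBB, hBBt⟩ := ih _ (hr ▸ rank_sub_vecMulVec_lt hp hpp he hee)
    (hp.sub_vecMulVec_self e) (isIdempotentElem_sub_vecMulVec hp hpp he hee) halt' rfl
  have hBe : Bᵀ * replicateCol Unit e = 0 := by
    calc Bᵀ * replicateCol Unit e = Bᵀ * (B * Bᵀ) * replicateCol Unit e := by
          rw [← Matrix.mul_assoc, hBB, Matrix.one_mul]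
      _ = 0 := by
          rw [hBBt, Matrix.mul_assoc, ← replicateCol_mulVec, sub_vecMulVec_mulVec_self he hee,
            replicateCol_zero, Matrix.mul_zero]
  refine ⟨Unit ⊕ κ, inferInstance, inferInstance, fromCols (replicateCol Unit e) B, ?_, ?_⟩
  · have hee' : replicateRow Unit e * replicateCol Unit e = 1 := by
      rw [replicateRow_mul_replicateCol, hee]
      rfl
    have heB : replicateRow Unit e * B = (Bᵀ * replicateCol Unit e)ᵀ := by
      rw [transpose_mul, transpose_replicateCol, transpose_transpose]
    rw [transpose_fromCols, fromRows_mul_fromCols, transpose_replicateCol, hee', heB, hBe, hBB,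
      transpose_zero, fromBlocks_one]
  · rw [transpose_fromCols, fromCols_mul_fromRows, transpose_replicateCol, ← vecMulVec_eq, hBBt,
      add_sub_cancel]

end CharTwo

end Field

end Matrix

theorem IsInvolutionOn.map_one_s15 {F A : Type*} [Field F] [Ring A] [Algebra F A] {σ : A →ₗ[F] A}
    (hσ : IsInvolutionOn F σ) : σ 1 = 1 := by
  simpa [hσ.2] using (hσ.1 (σ 1) 1).symm

namespace IsOrthInvolution

variable {F : Type*} [Field F] [CharP F 2] {ι : Type*} [Fintype ι] [DecidableEq ι]
  {τ : Matrix ι ι F →ₗ[F] Matrix ι ι F}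

theorem exists_isSymm_mul_eq_mul_transpose (hτ : IsOrthInvolution F τ) :
    ∃ q : Matrix ι ι F, IsUnit q ∧ q.IsSymm ∧ (∃ i, q i i ≠ 0) ∧ ∀ x, τ x * q = q * xᵀ := by
  obtain ⟨⟨hmul, hinv⟩, horth⟩ := hτ
  have : Nonempty ι := not_isEmpty_iff.1 fun _ => horth ⟨0, Subsingleton.elim _ _⟩
  let g : Matrix ι ι F →ₐ[F] Matrix ι ι F :=
    AlgHom.ofLinearMap (τ ∘ₗ (transposeLinearEquiv ι ι F F).toLinearMap)
      (by simpa using IsInvolutionOn.map_one_s15 ⟨hmul, hinv⟩)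
      (fun x y => by simp [hmul])
  obtain ⟨q₀, hq₀, hg⟩ := exists_ne_zero_algHom_mul_eq_mul g
  have hq₀τ : ∀ x, τ x * q₀ = q₀ * xᵀ := fun x => by
    simpa [g] using hg xᵀ
  have hq₀τ' : ∀ x, τ x * q₀ᵀ = q₀ᵀ * xᵀ := fun x => by
    simpa [hinv] using congrArg transpose (hq₀τ (τ x)).symm
  -- in characteristic two either `q₀` or `q₀ + q₀ᵀ` is a nonzero symmetric solution
  obtain ⟨q, hq0, hqs, hq⟩ : ∃ q : Matrix ι ι F, q ≠ 0 ∧ q.IsSymm ∧ ∀ x, τ x * q = q * xᵀ := by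
    by_cases hsum : q₀ + q₀ᵀ = 0
    · refine ⟨q₀, hq₀, ?_, hq₀τ⟩
      rw [IsSymm, ← neg_eq_of_add_eq_zero_right hsum, CharTwo.neg_eq]
    · refine ⟨q₀ + q₀ᵀ, hsum, ?_, fun x => by rw [mul_add, add_mul, hq₀τ, hq₀τ']⟩
      rw [IsSymm, transpose_add, transpose_transpose, add_comm]
  have hqu : IsUnit q := isUnit_of_forall_exists_mul_eq hq0 fun x => ⟨τ xᵀ, by
    rw [hq, transpose_transpose]⟩
  have hqdet := (isUnit_iff_isUnit_det q).1 hqu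
  refine ⟨q, hqu, hqs, ?_, hq⟩
  by_contra! hdiag
  obtain ⟨y, hy⟩ := exists_transpose_add_eq hqs hdiag
  refine horth ⟨y * q⁻¹, hqu.mul_left_inj.1 ?_⟩
  have hqinv : q⁻¹ᵀ = q⁻¹ := by rw [transpose_nonsing_inv, hqs.eq]
  rw [sub_mul, hq, transpose_mul, hqinv, ← Matrix.mul_assoc, mul_nonsing_inv _ hqdet,
    Matrix.mul_assoc, nonsing_inv_mul _ hqdet, Matrix.one_mul, Matrix.mul_one,
    CharTwo.sub_eq_add, hy, Matrix.one_mul]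

theorem exists_isIdempotentElem_mul_mul_eq_smul (hτ : IsOrthInvolution F τ) :
    ∃ e : Matrix ι ι F, IsIdempotentElem e ∧ τ e = e ∧ e ≠ 0 ∧
      ∀ x, ∃ c : F, e * x * e = c • e := by
  obtain ⟨q, hqu, hqs, ⟨i, hi⟩, hq⟩ := hτ.exists_isSymm_mul_eq_mul_transpose
  obtain ⟨a, hua, hqa⟩ : ∃ a : ι → F, Pi.single i 1 ⬝ᵥ a = 1 ∧ q *ᵥ Pi.single i 1 = q i i • a :=
    ⟨(q i i)⁻¹ • (q *ᵥ Pi.single i 1), by simp [mulVec_single, hi], by simp [smul_smul, hi]⟩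
  refine ⟨vecMulVec a (Pi.single i 1), isIdempotentElem_vecMulVec hua, hqu.mul_left_inj.1 ?_,
    fun h => ?_, fun x => ⟨_, vecMulVec_mul_mul_vecMulVec a _ x⟩⟩
  · rw [hq, transpose_vecMulVec, mul_vecMulVec, vecMulVec_mul, ← hqs.eq, vecMul_transpose,
      hqs.eq, hqa, smul_vecMulVec, vecMulVec_smul]
  · have ha : a = 0 := by simpa [vecMulVec_mulVec, hua] using congrArg (· *ᵥ a) h
    simp [ha] at hua

end IsOrthInvolution

theorem exists_algEquiv_of_mul_transpose_eq {F A : Type*} [Field F] [Ring A] [Algebra F A]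
    {ι κ : Type*} [Fintype ι] [Fintype κ] [DecidableEq κ] {σ : A →ₗ[F] A}
    (φ : A →ₙₐ[F] Matrix ι ι F) (hφ : Function.Injective φ) (hφσ : ∀ a, φ (σ a) = (φ a)ᵀ)
    (hcorner : ∀ X, φ 1 * X * φ 1 ∈ Set.range φ) {B : Matrix ι κ F} (hBB : Bᵀ * B = 1)
    (hBBt : B * Bᵀ = φ 1) :
    ∃ g : A ≃ₐ[F] Matrix κ κ F, ∀ a, g (σ a) = (g a)ᵀ := by
  have hpB : φ 1 * B = B := by rw [← hBBt, Matrix.mul_assoc, hBB, Matrix.mul_one]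
  have hBp : Bᵀ * φ 1 = Bᵀ := by rw [← hBBt, ← Matrix.mul_assoc, hBB, Matrix.one_mul]
  let g : A →ₐ[F] Matrix κ κ F := AlgHom.ofLinearMap
    { toFun := fun a => Bᵀ * φ a * B
      map_add' := fun a b => by rw [map_add, Matrix.mul_add, Matrix.add_mul]
      map_smul' := fun c a => by simp }
    (by simp only [LinearMap.coe_mk, AddHom.coe_mk]; rw [Matrix.mul_assoc, hpB, hBB])
    (fun a b => by
      simp only [LinearMap.coe_mk, AddHom.coe_mk, Matrix.mul_assoc]
      rw [← Matrix.mul_assoc B, hBBt, ← Matrix.mul_assoc (φ 1), ← map_mul, one_mul,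
        ← Matrix.mul_assoc (φ a), ← map_mul])
  have hBgB : ∀ a, B * g a * Bᵀ = φ a := fun a => by
    simp only [g, AlgHom.ofLinearMap_apply, LinearMap.coe_mk, AddHom.coe_mk, ← Matrix.mul_assoc,
      hBBt]
    rw [Matrix.mul_assoc, hBBt, ← map_mul, ← map_mul, one_mul, mul_one]
  have hinj : Function.Injective g := fun a b hab => hφ (by rw [← hBgB, hab, hBgB])
  have hsurj : Function.Surjective g := fun M => by
    obtain ⟨a, ha⟩ := hcorner (B * M * Bᵀ)
    refine ⟨a, ?_⟩
    simp only [g, AlgHom.ofLinearMap_apply, LinearMap.coe_mk, AddHom.coe_mk, ha,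
      ← Matrix.mul_assoc, hBp, hBB, Matrix.one_mul]
    rw [Matrix.mul_assoc, hpB, Matrix.mul_assoc, hBB, Matrix.mul_one]
  exact ⟨AlgEquiv.ofBijective g ⟨hinj, hsurj⟩, fun a => by
    simp [g, hφσ, transpose_mul, Matrix.mul_assoc]⟩

theorem exists_algEquiv_matrix_of_corner {F A : Type*} [Field F] [CharP F 2] [Ring A]
    [Algebra F A] {ι : Type*} [Fintype ι] [DecidableEq ι] {σ : A →ₗ[F] A}
    (hσ : IsOrthInvolution F σ) (φ : A →ₙₐ[F] Matrix ι ι F) (hφ : Function.Injective φ)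
    (hφσ : ∀ a, φ (σ a) = (φ a)ᵀ) (hcorner : ∀ X, φ 1 * X * φ 1 ∈ Set.range φ) :
    ∃ (κ : Type) (_ : Fintype κ) (_ : DecidableEq κ) (g : A ≃ₐ[F] Matrix κ κ F),
      ∀ a, g (σ a) = (g a)ᵀ := by
  set p := φ 1
  have hpp : IsIdempotentElem p := by rw [IsIdempotentElem, ← map_mul, mul_one]
  have hps : p.IsSymm := by rw [IsSymm, ← hφσ, hσ.1.map_one_s15]
  -- a zero diagonal would write `p = φ 1` as `φ (σ a - a)`
  have halt : (∀ i, p i i = 0) → p = 0 := by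
    intro hdiag
    obtain ⟨y, hy⟩ := exists_transpose_add_eq hps hdiag
    obtain ⟨a, ha⟩ := hcorner y
    refine absurd ⟨a, hφ ?_⟩ hσ.2
    have hneg : ∀ M : Matrix ι ι F, -M = M := fun M => by ext; simp [CharTwo.neg_eq]
    rw [map_sub, hφσ, ha, sub_eq_add_neg, hneg, transpose_mul, transpose_mul, hps.eq,
      ← Matrix.mul_assoc, ← Matrix.add_mul, ← Matrix.mul_add, hy, hpp.eq, hpp.eq]
  obtain ⟨κ, _, _, B, hBB, hBBt⟩ := exists_orthonormal_factorization hps hpp halt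
  exact ⟨κ, inferInstance, inferInstance,
    exists_algEquiv_of_mul_transpose_eq φ hφ hφσ hcorner hBB hBBt⟩

namespace TensorProduct

theorem injective_tmul_of_ne_zero {F M N : Type*} [Field F] [AddCommGroup M] [Module F M]
    [AddCommGroup N] [Module F N] {n : N} (hn : n ≠ 0) :
    Function.Injective fun m : M => m ⊗ₜ[F] n := fun m m' h => by
  obtain ⟨ℓ, hℓ⟩ := Module.Projective.exists_dual_eq_one F hn
  simpa [hℓ] using congrArg (TensorProduct.rid F M ∘ LinearMap.lTensor M ℓ) h

variable {F A B : Type*} [Field F] [Ring A] [Algebra F A] [Ring B] [Algebra F B] {e : B}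

def tmulIdempotent (he : IsIdempotentElem e) : A →ₙₐ[F] A ⊗[F] B where
  toFun a := a ⊗ₜ e
  map_smul' c a := by simp [smul_tmul']
  map_zero' := zero_tmul _ _
  map_add' a a' := add_tmul _ _ _
  map_mul' a a' := by simp [he.eq]

theorem exists_mul_mul_eq_tmul (he : ∀ x : B, ∃ c : F, e * x * e = c • e) (z : A ⊗[F] B) :
    ∃ a : A, (1 ⊗ₜ e) * z * (1 ⊗ₜ e) = a ⊗ₜ[F] e := by
  induction z using TensorProduct.induction_on with
  | zero => exact ⟨0, by simp⟩
  | tmul a x =>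
    obtain ⟨c, hc⟩ := he x
    exact ⟨c • a, by simp [hc, smul_tmul]⟩
  | add z z' hz hz' =>
    obtain ⟨a, ha⟩ := hz
    obtain ⟨a', ha'⟩ := hz'
    exact ⟨a + a', by rw [mul_add, add_mul, ha, ha', add_tmul]⟩

end TensorProduct

theorem Nat.eq_two_pow_pred_of_mul_self_mul_four {c n : ℕ} (h : c * c * 4 = 2 ^ n * 2 ^ n) :
    c = 2 ^ (n - 1) := by
  have h2 : 2 * c = 2 ^ n := Nat.pow_left_injective two_ne_zero <| by
    change (2 * c) ^ 2 = (2 ^ n) ^ 2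
    rw [sq (2 ^ n), ← h]
    ring
  obtain _ | n := n
  · omega
  · rw [pow_succ] at h2
    rw [Nat.add_sub_cancel]
    omega

theorem statement_15_general {F A : Type*} [Field F] [CharP F 2] [Ring A] [Algebra F A]
    (σ : A →ₗ[F] A) (hσ : IsOrthInvolution F σ)
    (τ : Matrix (Fin 2) (Fin 2) F →ₗ[F] Matrix (Fin 2) (Fin 2) F)
    (hτ : IsOrthInvolution F τ)
    (n : ℕ)
    (f : (A ⊗[F] Matrix (Fin 2) (Fin 2) F) ≃ₐ[F] Matrix (Fin (2 ^ n)) (Fin (2 ^ n)) F)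
    (hf : ∀ z, f (TensorProduct.map σ τ z) = (f z)ᵀ) :
    ∃ g : A ≃ₐ[F] Matrix (Fin (2 ^ (n - 1))) (Fin (2 ^ (n - 1))) F,
      ∀ x, g (σ x) = (g x)ᵀ := by
  obtain ⟨e, he, hτe, he0, hcorner⟩ := hτ.exists_isIdempotentElem_mul_mul_eq_smul
  let φ : A →ₙₐ[F] Matrix (Fin (2 ^ n)) (Fin (2 ^ n)) F :=
    (f : _ →ₐ[F] _).toNonUnitalAlgHom.comp (TensorProduct.tmulIdempotent he)
  have hφ : ∀ a, φ a = f (a ⊗ₜ e) := fun _ => rfl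
  obtain ⟨κ, _, _, g, hg⟩ := exists_algEquiv_matrix_of_corner hσ φ
    (f.injective.comp (TensorProduct.injective_tmul_of_ne_zero he0))
    (fun a => by simpa [hφ, hτe] using hf (a ⊗ₜ e))
    (fun X => by
      obtain ⟨a, ha⟩ := TensorProduct.exists_mul_mul_eq_tmul hcorner (f.symm X)
      exact ⟨a, by simpa [hφ] using congrArg f ha.symm⟩)
  have hcard : Fintype.card κ = 2 ^ (n - 1) := by
    refine Nat.eq_two_pow_pred_of_mul_self_mul_four ?_
    have hA := g.toLinearEquiv.finrank_eq
    have hT := f.toLinearEquiv.finrank_eq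
    simp only [Module.finrank_tensorProduct, Module.finrank_matrix, Fintype.card_fin,
      Module.finrank_self, mul_one] at hA hT
    rw [← hA, ← hT]
  exact ⟨g.trans (Matrix.reindexAlgEquiv F F (Fintype.equivFinOfCardEq hcard)), fun x => by
    simp [hg, Matrix.transpose_submatrix]⟩

/-- If `(A ⊗ M₂(F), σ ⊗ τ) ≅ (M_{2ⁿ}(F), t)` for a central simple algebra
with orthogonal involution `(A,σ)` and an orthogonal involution `τ` on `M₂(F)`, then
`(A,σ) ≅ (M_{2^{n-1}}(F), t)`. -/
theorem statement_15 {F A : Type*} [Field F] [CharP F 2] [Ring A] [Algebra F A]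
    [FiniteDimensional F A]
    (hcentral : ∀ z : A, (∀ y : A, z * y = y * z) → ∃ α : F, z = algebraMap F A α)
    (hsimple : IsSimpleRing A)
    (σ : A →ₗ[F] A) (hσ : IsOrthInvolution F σ)
    (τ : Matrix (Fin 2) (Fin 2) F →ₗ[F] Matrix (Fin 2) (Fin 2) F)
    (hτ : IsOrthInvolution F τ)
    (n : ℕ)
    (f : (A ⊗[F] Matrix (Fin 2) (Fin 2) F) ≃ₐ[F] Matrix (Fin (2 ^ n)) (Fin (2 ^ n)) F)
    (hf : ∀ z, f (TensorProduct.map σ τ z) = (f z)ᵀ) :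
    ∃ g : A ≃ₐ[F] Matrix (Fin (2 ^ (n - 1))) (Fin (2 ^ (n - 1))) F,
      ∀ x, g (σ x) = (g x)ᵀ :=
  statement_15_general σ hσ τ hτ n f hf
end
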